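/- Let M ∈ ℝ^{n×n} be symmetric and define F : ℝ^{n×r} → ℝ by F(X) = ‖M − XXᵀ‖², where ‖·‖ is the Frobenius norm. Suppose X ≥ 0 componentwise, X ≠ 0, and X is a stationary point of the problem min { F(X) : X ≥ 0 }, i.e., ⟨4(XXᵀ − M)X, Z − X⟩ ≥ 0 for all Z ≥ 0, where ⟨A, B⟩ = tr(AᵀB). Then the function g(t) = F((1+t)X) satisfies g'(0) = 0 and g''(0) = 8‖XXᵀ‖² > 0; consequently, X is not a local maximum of F restricted to the nonnegative orthant {X ∈ ℝ^{n×r} : X ≥ 0}. -/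

import Mathlib

/-!
Stationarity, tested against `Z = 2X` and `Z = 0`, forces `⟨(XXᵀ - M)X, X⟩ = 0`, that is
`⟨M, XXᵀ⟩ = ‖XXᵀ‖²`. Expanding the square then gives, along the ray through `X`,
`F(sX) = ‖M‖² - ‖XXᵀ‖² + ‖XXᵀ‖² (s² - 1)²`,
a polynomial in `s` that is strictly increasing for `s ≥ 1` because `XXᵀ ≠ 0`; since the ray
`s ≥ 1` stays in the nonnegative orthant, `X` cannot be a local maximum there.
-/

open Matrix Topology

attribute [local instance] Matrix.frobeniusNormedAddCommGroup Matrix.frobeniusNormedSpace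

section Frobenius

variable {m k : Type*} [Fintype m] [Fintype k]

theorem frobenius_norm_sq_eq_trace (A : Matrix m k ℝ) : ‖A‖ ^ 2 = trace (Aᵀ * A) := by
  rw [frobenius_norm_def, ← Real.rpow_natCast, ← Real.rpow_mul (by positivity)]
  norm_num [trace, mul_apply, Finset.sum_comm (γ := m), sq]

theorem frobenius_norm_sub_smul_sq (A B : Matrix m k ℝ) (s : ℝ) :
    ‖A - s • B‖ ^ 2 = ‖A‖ ^ 2 - 2 * s * trace (Aᵀ * B) + s ^ 2 * ‖B‖ ^ 2 := by
  have hBA : trace (Bᵀ * A) = trace (Aᵀ * B) := by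
    rw [← trace_transpose, transpose_mul, transpose_transpose]
  simp only [frobenius_norm_sq_eq_trace, transpose_sub, transpose_smul, Matrix.sub_mul,
    Matrix.mul_sub, Matrix.smul_mul, Matrix.mul_smul, trace_sub, trace_smul, smul_eq_mul, hBA]
  ring

theorem frobenius_norm_sub_smul_mul_transpose_sq (M : Matrix m m ℝ) (X : Matrix m k ℝ)
    (s : ℝ) :
    ‖M - (s • X) * (s • X)ᵀ‖ ^ 2 =
      ‖M‖ ^ 2 - 2 * s ^ 2 * trace (Mᵀ * (X * Xᵀ)) + s ^ 4 * ‖X * Xᵀ‖ ^ 2 := by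
  rw [transpose_smul, Matrix.smul_mul, Matrix.mul_smul, smul_smul, ← sq,
    frobenius_norm_sub_smul_sq]
  ring

theorem trace_transpose_mul_eq_zero_of_stationary {G X : Matrix m k ℝ}
    (hX : ∀ i j, 0 ≤ X i j)
    (hstat : ∀ Z : Matrix m k ℝ, (∀ i j, 0 ≤ Z i j) → 0 ≤ trace (Gᵀ * (Z - X))) :
    trace (Gᵀ * X) = 0 := by
  have hup := hstat (2 • X) fun i j => by simpa using mul_nonneg zero_le_two (hX i j)
  have hdown := hstat 0 fun _ _ => le_rfl
  rw [two_nsmul, add_sub_cancel_right] at hup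
  rw [zero_sub, Matrix.mul_neg, trace_neg] at hdown
  linarith

theorem trace_gradient_transpose_mul (M : Matrix m m ℝ) (X : Matrix m k ℝ) :
    trace (((X * Xᵀ - M) * X)ᵀ * X) = ‖X * Xᵀ‖ ^ 2 - trace (Mᵀ * (X * Xᵀ)) := by
  rw [transpose_mul, Matrix.mul_assoc, trace_mul_comm, Matrix.mul_assoc, transpose_sub,
    sub_mul, trace_sub, frobenius_norm_sq_eq_trace]

theorem frobenius_norm_mul_transpose_pos {X : Matrix m k ℝ} (hX : X ≠ 0) :
    0 < ‖X * Xᵀ‖ := by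
  rw [norm_pos_iff, ← conjTranspose_eq_transpose_of_trivial]
  exact mt self_mul_conjTranspose_eq_zero.mp hX

end Frobenius

theorem hasDerivAt_quartic (a b t : ℝ) :
    HasDerivAt (fun t => a + b * ((1 + t) ^ 2 - 1) ^ 2)
      (4 * b * (((1 + t) ^ 2 - 1) * (1 + t))) t := by
  have hs : HasDerivAt (fun t : ℝ => 1 + t) 1 t := (hasDerivAt_id t).const_add 1
  refine ((((hs.pow 2).sub_const 1).pow 2).const_mul b).const_add a |>.congr_deriv ?_
  simp only [Pi.pow_apply]
  ring

theorem hasDerivAt_deriv_quartic (a b : ℝ) :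
    HasDerivAt (deriv fun t => a + b * ((1 + t) ^ 2 - 1) ^ 2) (8 * b) 0 := by
  rw [funext fun t => (hasDerivAt_quartic a b t).deriv]
  have hs : HasDerivAt (fun t : ℝ => 1 + t) 1 0 := (hasDerivAt_id 0).const_add 1
  refine (((hs.pow 2).sub_const 1).mul hs).const_mul (4 * b) |>.congr_deriv ?_
  simp only [Pi.pow_apply]
  ring

theorem not_isLocalMaxOn_Ici_of_lt {α β : Type*} [TopologicalSpace α] [LinearOrder α]
    [OrderTopology α] [DenselyOrdered α] [NoMaxOrder α] [Preorder β] {f : α → β} {a : α}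
    (h : ∀ t, a < t → f a < f t) : ¬ IsLocalMaxOn f (Set.Ici a) a := fun hmax =>
  have hright : ∀ᶠ t in 𝓝[>] a, f t ≤ f a := nhdsWithin_mono a Set.Ioi_subset_Ici_self hmax
  let ⟨t, hle, hat⟩ := (hright.and self_mem_nhdsWithin).exists
  (h t hat).not_ge hle

theorem stmt_18_general {n r : ℕ} (M : Matrix (Fin n) (Fin n) ℝ)
    (F : Matrix (Fin n) (Fin r) ℝ → ℝ)
    (hF : ∀ Y : Matrix (Fin n) (Fin r) ℝ, F Y = ‖M - Y * Yᵀ‖ ^ 2)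
    (X : Matrix (Fin n) (Fin r) ℝ) (hXnn : ∀ i j, 0 ≤ X i j) (hX0 : X ≠ 0)
    (hstat : ∀ Z : Matrix (Fin n) (Fin r) ℝ, (∀ i j, 0 ≤ Z i j) →
      0 ≤ Matrix.trace (((4 : ℝ) • ((X * Xᵀ - M) * X))ᵀ * (Z - X)))
    (g : ℝ → ℝ) (hg : ∀ t : ℝ, g t = F (((1 + t) : ℝ) • X)) :
    HasDerivAt g 0 0 ∧
    HasDerivAt (deriv g) (8 * ‖X * Xᵀ‖ ^ 2) 0 ∧
    0 < 8 * ‖X * Xᵀ‖ ^ 2 ∧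
    ¬ IsLocalMaxOn F {Y : Matrix (Fin n) (Fin r) ℝ | ∀ i j, 0 ≤ Y i j} X := by
  set b := ‖X * Xᵀ‖ ^ 2
  have hcb : trace (Mᵀ * (X * Xᵀ)) = b := by
    have h := trace_transpose_mul_eq_zero_of_stationary hXnn hstat
    rw [transpose_smul, Matrix.smul_mul, trace_smul, smul_eq_mul,
      trace_gradient_transpose_mul] at h
    linarith
  have hg_eq : g = fun t => (‖M‖ ^ 2 - b) + b * ((1 + t) ^ 2 - 1) ^ 2 := funext fun t => by
    rw [hg, hF, frobenius_norm_sub_smul_mul_transpose_sq, hcb]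
    ring
  have hb : 0 < b := pow_pos (frobenius_norm_mul_transpose_pos hX0) 2
  refine ⟨?_, hg_eq ▸ hasDerivAt_deriv_quartic _ b, by positivity, fun hmax => ?_⟩
  · simpa [hg_eq] using hasDerivAt_quartic (‖M‖ ^ 2 - b) b 0
  · have hray : IsLocalMaxOn g (Set.Ici 0) 0 := by
      rw [funext hg]
      refine IsLocalMaxOn.comp_continuousOn (by simpa using hmax) (fun t ht => ?_)
        (by fun_prop) Set.self_mem_Ici
      intro i j
      simpa using mul_nonneg (by linarith [Set.mem_Ici.mp ht]) (hXnn i j)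
    refine not_isLocalMaxOn_Ici_of_lt (fun t ht => ?_) hray
    have hsq : 0 < (1 + t) ^ 2 - 1 := by nlinarith
    simpa [hg_eq] using mul_pos hb (pow_pos hsq 2)

/-- if `X ≥ 0`, `X ≠ 0` is a stationary point of
`min { F(X) = ‖M − XXᵀ‖² : X ≥ 0 }`, i.e. `⟨4(XXᵀ − M)X, Z − X⟩ ≥ 0` for all `Z ≥ 0`,
then `g(t) = F((1+t)X)` satisfies `g'(0) = 0` and `g''(0) = 8‖XXᵀ‖² > 0`; consequently
`X` is not a local maximum of `F` on the nonnegative orthant. -/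
theorem stmt_18 {n r : ℕ} (M : Matrix (Fin n) (Fin n) ℝ) (hM : M.IsSymm)
    (F : Matrix (Fin n) (Fin r) ℝ → ℝ)
    (hF : ∀ Y : Matrix (Fin n) (Fin r) ℝ, F Y = ‖M - Y * Yᵀ‖ ^ 2)
    (X : Matrix (Fin n) (Fin r) ℝ) (hXnn : ∀ i j, 0 ≤ X i j) (hX0 : X ≠ 0)
    (hstat : ∀ Z : Matrix (Fin n) (Fin r) ℝ, (∀ i j, 0 ≤ Z i j) →
      0 ≤ Matrix.trace (((4 : ℝ) • ((X * Xᵀ - M) * X))ᵀ * (Z - X)))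
    (g : ℝ → ℝ) (hg : ∀ t : ℝ, g t = F (((1 + t) : ℝ) • X)) :
    HasDerivAt g 0 0 ∧
    HasDerivAt (deriv g) (8 * ‖X * Xᵀ‖ ^ 2) 0 ∧
    0 < 8 * ‖X * Xᵀ‖ ^ 2 ∧
    ¬ IsLocalMaxOn F {Y : Matrix (Fin n) (Fin r) ℝ | ∀ i j, 0 ≤ Y i j} X :=
  stmt_18_general M F hF X hXnn hX0 hstat g hg
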